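/- Let a = 2cos(π/15). Then β = 92a³ + 272a² + 164a − 47 satisfies β > 1 and is a Pisot number. -/

import Mathlib

/-!
Writing `a = 2 cos (π/15)`, the Vieta–Lucas polynomial `C₅ = X⁵ - 5X³ + 5X` satisfies
`C₅(a) = 2 cos (π/3) = 1`, and dividing out the root `a = 1` leaves `a⁴ + a³ - 4a² - 4a + 1 = 0`.
Reducing modulo this quartic shows that `β = 92a³ + 272a² + 164a - 47` is a root of the monic
integer polynomial `q = X⁴ - 2004X³ + 806X² - 84X + 1`, so `β` is an algebraic integer. The sign
changes of `q` on `0 < 1/10 < 1/5 < 1` give three roots in `(0, 1)`; together with `β > 1` these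
are all four roots of `q`, and every conjugate of `β` is a root of `q` because `minpoly ℚ β ∣ q`.
-/

/-- A Pisot number: a real algebraic integer `β > 1` all of whose Galois conjugates
(the other complex roots of its minimal polynomial over `ℚ`) have modulus `< 1`. -/
def IsPisot (β : ℝ) : Prop :=
  1 < β ∧ IsIntegral ℤ β ∧
    ∀ z : ℂ, z ≠ (β : ℂ) → Polynomial.aeval z (minpoly ℚ β) = 0 → ‖z‖ < 1

/-- `a = 2 cos (π/15)`. -/
noncomputable def a15 : ℝ := 2 * Real.cos (Real.pi / 15)

open Polynomial

theorem Polynomial.Chebyshev.C_five (R : Type*) [CommRing R] :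
    C R 5 = X ^ 5 - 5 * X ^ 3 + 5 * X := by
  have h3 : C R 3 = X ^ 3 - 3 * X := by
    rw [show (3 : ℤ) = 1 + 2 by norm_num, C_add_two]
    norm_num [C_two]
    ring
  have h4 : C R 4 = X ^ 4 - 4 * X ^ 2 + 2 := by
    rw [show (4 : ℤ) = 2 + 2 by norm_num, C_add_two]
    norm_num [h3, C_two]
    ring
  rw [show (5 : ℤ) = 3 + 2 by norm_num, C_add_two]
  norm_num [h3, h4]
  ring

theorem Polynomial.mem_of_aeval_eq_zero_of_natDegree_le_card {R A : Type*} [CommRing R]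
    [CommRing A] [IsDomain A] [Algebra R A] {p : R[X]} (hp : p.Monic) {s : Finset A}
    (hs : ∀ x ∈ s, aeval x p = 0) (hcard : p.natDegree ≤ s.card) {z : A} (hz : aeval z p = 0) :
    z ∈ s := by
  classical
  set P := p.map (algebraMap R A)
  have hP : P ≠ 0 := (hp.map _).ne_zero
  by_contra hzs
  have hsub : (insert z s).val ⊆ P.roots := fun x hx => by
    rw [mem_roots hP, IsRoot, eval_map_algebraMap]
    rcases Finset.mem_insert.1 hx with rfl | hx
    exacts [hz, hs x hx]
  have := card_le_degree_of_subset_roots hsub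
  rw [Finset.card_insert_of_notMem hzs, hp.natDegree_map] at this
  omega

theorem one_lt_a15 : 1 < a15 := by
  have : Real.cos (Real.pi / 3) < Real.cos (Real.pi / 15) :=
    Real.cos_lt_cos_of_nonneg_of_le_pi (by positivity) (by linarith [Real.pi_pos])
      (by linarith [Real.pi_pos])
  rw [Real.cos_pi_div_three] at this
  unfold a15
  linarith

theorem a15_quintic : a15 ^ 5 - 5 * a15 ^ 3 + 5 * a15 = 1 := by
  have h := Chebyshev.C_two_mul_real_cos (Real.pi / 15) 5
  rw [Chebyshev.C_five, show ((5 : ℤ) : ℝ) * (Real.pi / 15) = Real.pi / 3 by push_cast; ring,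
    Real.cos_pi_div_three] at h
  simpa [a15] using h

theorem a15_quartic : a15 ^ 4 + a15 ^ 3 - 4 * a15 ^ 2 - 4 * a15 + 1 = 0 := by
  have h : (a15 - 1) * (a15 ^ 4 + a15 ^ 3 - 4 * a15 ^ 2 - 4 * a15 + 1) = 0 := by
    linear_combination a15_quintic
  exact (mul_eq_zero.1 h).resolve_left (sub_ne_zero.2 one_lt_a15.ne')

noncomputable def beta15 : ℝ := 92 * a15 ^ 3 + 272 * a15 ^ 2 + 164 * a15 - 47

noncomputable def beta15Poly : ℤ[X] := X ^ 4 - 2004 * X ^ 3 + 806 * X ^ 2 - 84 * X + 1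

theorem aeval_beta15Poly {A : Type*} [CommRing A] (x : A) :
    aeval x beta15Poly = x ^ 4 - 2004 * x ^ 3 + 806 * x ^ 2 - 84 * x + 1 := by
  simp only [beta15Poly, map_add, map_sub, map_mul, map_pow, map_one, map_ofNat, aeval_X]

theorem beta15Poly_monic : beta15Poly.Monic := by
  unfold beta15Poly
  monicity!

theorem beta15Poly_natDegree : beta15Poly.natDegree = 4 := by
  unfold beta15Poly
  compute_degree!

theorem one_lt_beta15 : 1 < beta15 := by
  have := one_lt_a15
  unfold beta15
  nlinarith

theorem aeval_beta15_beta15Poly : aeval beta15 beta15Poly = 0 := by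
  rw [aeval_beta15Poly, beta15]
  -- the cofactor is the quotient of `q(β(a))` by the quartic of `a`
  linear_combination (71639296 * a15 ^ 8 + 775573248 * a15 ^ 7 + 3779006720 * a15 ^ 6
    + 9839207168 * a15 ^ 5 + 13402919424 * a15 ^ 4 + 7684174592 * a15 ^ 3
    - 507582720 * a15 ^ 2 - 1399648768 * a15 + 214725376) * a15_quartic

theorem exists_beta15Poly_roots_Ioo :
    ∃ s : Finset ℝ, s.card = 3 ∧ ∀ x ∈ s, aeval x beta15Poly = 0 ∧ x ∈ Set.Ioo 0 1 := by
  have hq : Continuous fun x : ℝ => aeval x beta15Poly := beta15Poly.continuous_aeval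
  obtain ⟨x₁, ⟨h₁, h₁'⟩, hx₁⟩ := intermediate_value_Ioo' (by norm_num : (0 : ℝ) ≤ 1 / 10)
    hq.continuousOn (show (0 : ℝ) ∈ Set.Ioo _ _ by norm_num [aeval_beta15Poly])
  obtain ⟨x₂, ⟨h₂, h₂'⟩, hx₂⟩ := intermediate_value_Ioo (by norm_num : (1 / 10 : ℝ) ≤ 1 / 5)
    hq.continuousOn (show (0 : ℝ) ∈ Set.Ioo _ _ by norm_num [aeval_beta15Poly])
  obtain ⟨x₃, ⟨h₃, h₃'⟩, hx₃⟩ := intermediate_value_Ioo' (by norm_num : (1 / 5 : ℝ) ≤ 1)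
    hq.continuousOn (show (0 : ℝ) ∈ Set.Ioo _ _ by norm_num [aeval_beta15Poly])
  refine ⟨{x₁, x₂, x₃}, Finset.card_eq_three.2 ⟨x₁, x₂, x₃, by grind, by grind, by grind, rfl⟩, ?_⟩
  simp only [Finset.mem_insert, Finset.mem_singleton, Set.mem_Ioo]
  rintro x (rfl | rfl | rfl)
  exacts [⟨hx₁, h₁, by linarith⟩, ⟨hx₂, by linarith, by linarith⟩, ⟨hx₃, by linarith, h₃'⟩]

theorem norm_lt_one_of_aeval_beta15Poly_eq_zero {z : ℂ} (hz : aeval z beta15Poly = 0)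
    (hzβ : z ≠ beta15) : ‖z‖ < 1 := by
  obtain ⟨s, hcard, hs⟩ := exists_beta15Poly_roots_Ioo
  have hβs : beta15 ∉ s := fun h => (hs _ h).2.2.not_gt one_lt_beta15
  have hroots : ∀ x ∈ insert beta15 s, aeval x beta15Poly = 0 := by
    simp only [Finset.mem_insert]
    rintro x (rfl | hx)
    exacts [aeval_beta15_beta15Poly, (hs x hx).1]
  have hzmem : z ∈ (insert beta15 s).image ((↑) : ℝ → ℂ) := by
    refine mem_of_aeval_eq_zero_of_natDegree_le_card beta15Poly_monic ?_ ?_ hz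
    · simp only [Finset.mem_image]
      rintro _ ⟨x, hx, rfl⟩
      have hx := hroots x hx
      rw [aeval_beta15Poly] at hx ⊢
      exact_mod_cast hx
    · rw [Finset.card_image_of_injective _ Complex.ofReal_injective,
        Finset.card_insert_of_notMem hβs, hcard, beta15Poly_natDegree]
  obtain ⟨x, hx, rfl⟩ := Finset.mem_image.1 hzmem
  obtain rfl | hx := Finset.mem_insert.1 hx
  · exact (hzβ rfl).elim
  · obtain ⟨-, h0, h1⟩ := hs x hx
    rwa [Complex.norm_real, Real.norm_of_nonneg h0.le]

theorem stmt_18 :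
    1 < 92 * a15 ^ 3 + 272 * a15 ^ 2 + 164 * a15 - 47 ∧
    IsPisot (92 * a15 ^ 3 + 272 * a15 ^ 2 + 164 * a15 - 47) := by
  have hdvd : minpoly ℚ beta15 ∣ beta15Poly.map (algebraMap ℤ ℚ) :=
    minpoly.dvd ℚ _ (by rw [aeval_map_algebraMap, aeval_beta15_beta15Poly])
  refine ⟨one_lt_beta15, one_lt_beta15,
    ⟨beta15Poly, beta15Poly_monic, aeval_beta15_beta15Poly⟩, fun z hzβ hz => ?_⟩
  refine norm_lt_one_of_aeval_beta15Poly_eq_zero ?_ hzβ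
  rw [← aeval_map_algebraMap ℚ]
  exact aeval_eq_zero_of_dvd_aeval_eq_zero hdvd hz
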